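/- For every integer n ≥ 1, one has (Q_{n-1} − 2b_n)·(−1)^n = 1 as an identity of integers; equivalently, Q_{n-1} − 2b_n = (−1)^n. -/
import Mathlib

def genQ : ℕ → ℤ
  | 0 => 1
  | 1 => 3
  | n + 2 => 2 * genQ (n + 1) + genQ n

def seqB : ℕ → ℤ
  | 0 => 0
  | 1 => 1
  | 2 => 1
  | n + 3 => seqB (n + 2) + 3 * seqB (n + 1) + seqB n

lemma aux : ∀ n : ℕ, (genQ n - 2 * seqB (n+1) = (-1 : ℤ) ^ (n+1)) ∧
    (genQ (n+1) - 2 * seqB (n+2) = (-1 : ℤ) ^ (n+2)) ∧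
    (genQ (n+2) - 2 * seqB (n+3) = (-1 : ℤ) ^ (n+3)) := by
  intro n
  induction n with
  | zero => norm_num [genQ, seqB]
  | succ m ih =>
    obtain ⟨h1, h2, h3⟩ := ih
    refine ⟨h2, h3, ?_⟩
    have hq : genQ (m+3) = genQ (m+2) + 3 * genQ (m+1) + genQ m := by
      show 2 * genQ (m+2) + genQ (m+1) = genQ (m+2) + 3 * genQ (m+1) + genQ m
      show 2 * (2 * genQ (m+1) + genQ m) + genQ (m+1)
        = (2 * genQ (m+1) + genQ m) + 3 * genQ (m+1) + genQ m
      ring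
    have hb : seqB (m+4) = seqB (m+3) + 3 * seqB (m+2) + seqB (m+1) := rfl
    rw [hq, hb]
    have : ((-1 : ℤ)) ^ (m+4) = (-1)^(m+3) + 3 * (-1)^(m+2) + (-1)^(m+1) := by
      ring
    rw [show m+1+3 = m+4 from rfl, this]
    linarith

theorem stmt8 (n : ℕ) (hn : 1 ≤ n) :
    (genQ (n - 1) - 2 * seqB n) * (-1 : ℤ) ^ n = 1 ∧
      genQ (n - 1) - 2 * seqB n = (-1 : ℤ) ^ n := by
  obtain ⟨m, rfl⟩ := Nat.exists_eq_add_of_le hn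
  simp only [Nat.add_sub_cancel_left] -- 1 + m - 1 = m
  have h := (aux m).1
  rw [show 1 + m = m + 1 from Nat.add_comm 1 m]
  constructor
  · rw [h, ← pow_add, ← two_mul, pow_mul]
    norm_num
  · exact h
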